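/- Let A be a commutative Banach algebra over ℂ and let I₁, …, I_n be closed ideals of A, each of which is weakly amenable (as a Banach algebra in its own right). Then the closed ideal J obtained as the norm closure of I₁ + ⋯ + I_n in A is weakly amenable. -/

import Mathlib

/-- For a commutative Banach algebra `A` over `ℂ` and a closed linear subspace
`S ⊆ A` which is closed under multiplication (e.g. a closed ideal), a continuous
linear map `D : S → S*` is a derivation if `D(ab) = a·D(b) + D(a)·b`, where the
module actions on the dual are given by `(a·φ)(b) = φ(ab) = (φ·a)(b)`.  Evaluating
at `c ∈ S` this reads `D(ab)(c) = D(b)(ac) + D(a)(bc)`. -/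
def IsDerivationOn {A : Type*} [NonUnitalNormedCommRing A] [NormedSpace ℂ A]
    [IsScalarTower ℂ A A] [SMulCommClass ℂ A A]
    (S : Submodule ℂ A) (D : S →L[ℂ] (S →L[ℂ] ℂ)) : Prop :=
  ∀ (a b c : S) (hab : (a : A) * (b : A) ∈ S) (hac : (a : A) * (c : A) ∈ S)
    (hbc : (b : A) * (c : A) ∈ S),
    D ⟨(a : A) * (b : A), hab⟩ c
      = D b ⟨(a : A) * (c : A), hac⟩ + D a ⟨(b : A) * (c : A), hbc⟩

/-- A (not necessarily unital) closed subalgebra realised as a multiplicatively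
closed subspace `S` of a commutative Banach algebra `A` is weakly amenable if every
continuous derivation `D : S → S*` is zero (for commutative algebras this is
equivalent to every such derivation being inner). -/
def WeaklyAmenableOn {A : Type*} [NonUnitalNormedCommRing A] [NormedSpace ℂ A]
    [IsScalarTower ℂ A A] [SMulCommClass ℂ A A] (S : Submodule ℂ A) : Prop :=
  ∀ D : S →L[ℂ] (S →L[ℂ] ℂ), IsDerivationOn S D → D = 0

/-- Let `A` be a commutative Banach algebra over `ℂ` and let `I₁, …, Iₙ` be closed
ideals of `A`, each of which is weakly amenable as a Banach algebra in its own
right.  Then the closed ideal `J` obtained as the norm closure of `I₁ + ⋯ + Iₙ`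
in `A` is weakly amenable. -/
theorem weaklyAmenable_closure_sum
    {A : Type*} [NonUnitalNormedCommRing A] [NormedSpace ℂ A]
    [IsScalarTower ℂ A A] [SMulCommClass ℂ A A] [CompleteSpace A]
    (n : ℕ) (I : Fin n → Submodule ℂ A)
    (hclosed : ∀ i, IsClosed ((I i : Set A)))
    (hideal : ∀ i, ∀ a : A, ∀ b ∈ I i, a * b ∈ I i)
    (hwa : ∀ i, WeaklyAmenableOn (I i)) :
    WeaklyAmenableOn ((⨆ i, I i).topologicalClosure) := by
  classical
  intro D hD
  have hle : ∀ i, I i ≤ (⨆ i, I i) := fun i => le_iSup I i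
  have hleJ : ∀ i, I i ≤ (⨆ i, I i).topologicalClosure := fun i =>
    (hle i).trans (Submodule.le_topologicalClosure _)
  -- continuous inclusion maps
  let ι : ∀ i, (I i) →L[ℂ] (⨆ i, I i).topologicalClosure := fun i =>
    LinearMap.mkContinuous (Submodule.inclusion (hleJ i)) 1
      (fun x => by rw [one_mul]; exact le_of_eq rfl)
  -- the algebraic sum is an ideal
  have hSideal : ∀ (a : A), ∀ x ∈ (⨆ i, I i), a * x ∈ (⨆ i, I i) := by
    intro a x hx
    refine Submodule.iSup_induction (motive := fun y => a * y ∈ ⨆ i, I i) I hx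
      (fun i y hy => ?_) ?_ (fun y z hy hz => ?_)
    · exact hle i (hideal i a y hy)
    · simp
    · show a * (y + z) ∈ ⨆ i, I i
      rw [mul_add]; exact Submodule.add_mem _ hy hz
  -- the closure is an ideal
  have hJideal : ∀ (a : A), ∀ x ∈ (⨆ i, I i).topologicalClosure,
      a * x ∈ (⨆ i, I i).topologicalClosure := by
    intro a x hx
    have hx' : x ∈ closure ((⨆ i, I i : Submodule ℂ A) : Set A) := hx
    exact map_mem_closure (continuous_const.mul continuous_id) hx'
      (fun y hy => hSideal a y hy)
  -- Step 3: D vanishes on pairs from the same ideal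
  have step3 : ∀ i (u v : I i), D (ι i u) (ι i v) = 0 := by
    intro i
    have hDi : IsDerivationOn (I i) (((D.comp (ι i)).flip.comp (ι i)).flip) := by
      intro a b c hab hac hbc
      exact hD (ι i a) (ι i b) (ι i c) (hleJ i hab) (hleJ i hac) (hleJ i hbc)
    have h0 := hwa i _ hDi
    intro u v
    have := DFunLike.congr_fun (DFunLike.congr_fun h0 u) v
    simpa using this
  -- key step: D vanishes on (products within I i, anything)
  have key : ∀ i (u v : I i) (b : (⨆ i, I i).topologicalClosure)
      (h : (u : A) * (v : A) ∈ (⨆ i, I i).topologicalClosure),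
      D ⟨(u : A) * (v : A), h⟩ b = 0 := by
    intro i u v b h
    have hac : ((ι i u) : A) * ((b : A)) ∈ (⨆ i, I i).topologicalClosure :=
      hJideal (u : A) (b : A) b.2
    have hbc : ((ι i v) : A) * ((b : A)) ∈ (⨆ i, I i).topologicalClosure :=
      hJideal (v : A) (b : A) b.2
    have h1 := hD (ι i u) (ι i v) b h hac hbc
    have hub : (u : A) * (b : A) ∈ I i := by
      rw [mul_comm]; exact hideal i (b : A) (u : A) u.2
    have hvb : (v : A) * (b : A) ∈ I i := by
      rw [mul_comm]; exact hideal i (b : A) (v : A) v.2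
    calc D ⟨(u : A) * (v : A), h⟩ b
        = D (ι i v) (ι i ⟨(u : A) * (b : A), hub⟩)
          + D (ι i u) (ι i ⟨(v : A) * (b : A), hvb⟩) := h1
      _ = 0 := by rw [step3 i v _, step3 i u _, add_zero]
  -- Step 5: D vanishes on (I i, anything)
  have step5 : ∀ i (b : (⨆ i, I i).topologicalClosure) (a : I i), D (ι i a) b = 0 := by
    intro i b
    set φ : (I i) →L[ℂ] ℂ := (D.flip b).comp (ι i) with hφdef
    have hφprod : ∀ (u v : I i) (h : (u : A) * (v : A) ∈ I i), φ ⟨_, h⟩ = 0 := by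
      intro u v h
      exact key i u v b (hleJ i h)
    have hE : IsDerivationOn (I i) (φ.smulRight φ) := by
      intro a b' c hab hac hbc
      simp only [ContinuousLinearMap.smulRight_apply, ContinuousLinearMap.smul_apply,
        smul_eq_mul]
      rw [hφprod a b' hab, hφprod a c hac, hφprod b' c hbc]
      ring
    have hE0 := hwa i _ hE
    intro a
    have h1 : φ a * φ a = 0 := by
      have := DFunLike.congr_fun (DFunLike.congr_fun hE0 a) a
      simpa using this
    exact mul_self_eq_zero.mp h1
  -- conclude by density
  have hfinal : ∀ (b x : (⨆ i, I i).topologicalClosure), D x b = 0 := by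
    intro b
    have hzero : ∀ y : (⨆ i, I i).topologicalClosure,
        (y : A) ∈ (⨆ i, I i) → D y b = 0 := by
      intro y hy
      have key2 : ∀ h : (y : A) ∈ (⨆ i, I i).topologicalClosure, D ⟨(y : A), h⟩ b = 0 := by
        refine Submodule.iSup_induction'
          (motive := fun z _ => ∀ h : z ∈ (⨆ i, I i).topologicalClosure, D ⟨z, h⟩ b = 0) I
          (fun j z hz h => ?_) (fun h => ?_) (fun z w hz hw hz' hw' h => ?_) hy
        · exact step5 j b ⟨z, hz⟩
        · have h0 : (⟨0, h⟩ : (⨆ i, I i).topologicalClosure) = 0 := rfl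
          rw [h0, map_zero]; rfl
        · have hzJ : z ∈ (⨆ i, I i).topologicalClosure :=
            Submodule.le_topologicalClosure _ hz
          have hwJ : w ∈ (⨆ i, I i).topologicalClosure :=
            Submodule.le_topologicalClosure _ hw
          have hsum : (⟨z + w, h⟩ : (⨆ i, I i).topologicalClosure)
              = ⟨z, hzJ⟩ + ⟨w, hwJ⟩ := rfl
          rw [hsum, map_add, ContinuousLinearMap.add_apply, hz' hzJ, hw' hwJ, add_zero]
      exact key2 y.2
    have hdense : Dense {y : (⨆ i, I i).topologicalClosure | (y : A) ∈ (⨆ i, I i)} := by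
      intro y
      rw [closure_subtype]
      have himg : ((⨆ i, I i : Submodule ℂ A) : Set A)
          ⊆ (fun z : (⨆ i, I i).topologicalClosure => (z : A)) ''
            {y : (⨆ i, I i).topologicalClosure | (y : A) ∈ (⨆ i, I i)} := by
        intro z hz
        exact ⟨⟨z, Submodule.le_topologicalClosure _ hz⟩, hz, rfl⟩
      have hycl : (y : A) ∈ closure ((⨆ i, I i : Submodule ℂ A) : Set A) := y.2
      exact closure_mono himg hycl
    have heq := Continuous.ext_on hdense (D.flip b).continuous continuous_const
      (fun y hy => hzero y hy)
    intro x
    exact congrFun heq x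
  exact ContinuousLinearMap.ext fun x => ContinuousLinearMap.ext fun b => by
    simpa using hfinal b x
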